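/- Let δ be a smooth symmetric diagonal, α(u) = ∫₀ᵘ δ(t) dt, and K_δ(u,v) = min{u, v, (δ(u)+δ(v))/2} its diagonal copula. Then ∫₀¹∫₀¹ K_δ(u,v) du dv ≤ 2·α(1) − 2·α(1)² − 1/6. -/

import Mathlib

open MeasureTheory Set

noncomputable section

/-- A smooth symmetric diagonal `δ` with (continuous) derivative `δ'`:
continuous, strictly increasing, 2-Lipschitz, `δ(0)=0`, `δ(1)=1`, `δ(t) ≤ t`,
satisfying the symmetry identity `δ(u) = 2u - 1 + δ(1-u)`, differentiable with
continuous derivative, and `0 < δ'(u) < 2` for all but finitely many `u`. -/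
def SmoothSymDiagonal (δ δ' : ℝ → ℝ) : Prop :=
  ContinuousOn δ (Icc 0 1) ∧
  StrictMonoOn δ (Icc 0 1) ∧
  (∀ u ∈ Icc (0:ℝ) 1, ∀ v ∈ Icc (0:ℝ) 1, |δ u - δ v| ≤ 2 * |u - v|) ∧
  δ 0 = 0 ∧ δ 1 = 1 ∧
  (∀ t ∈ Icc (0:ℝ) 1, δ t ∈ Icc (0:ℝ) 1 ∧ δ t ≤ t) ∧
  (∀ u ∈ Icc (0:ℝ) 1, δ u = 2 * u - 1 + δ (1 - u)) ∧
  (∀ u ∈ Icc (0:ℝ) 1, HasDerivWithinAt δ (δ' u) (Icc 0 1) u) ∧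
  ContinuousOn δ' (Icc 0 1) ∧
  {u ∈ Icc (0:ℝ) 1 | ¬(0 < δ' u ∧ δ' u < 2)}.Finite

/-- `finv` is the inverse of the bijection `f : [0,1] → [0,1]`. -/
def InverseOnUnitInterval (f finv : ℝ → ℝ) : Prop :=
  (∀ t ∈ Icc (0:ℝ) 1, finv t ∈ Icc (0:ℝ) 1) ∧
  (∀ t ∈ Icc (0:ℝ) 1, f (finv t) = t) ∧
  (∀ t ∈ Icc (0:ℝ) 1, finv (f t) = t)

/-- The diagonal copula `K_δ(u,v) = min {u, v, (δ(u)+δ(v))/2}`. -/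
def diagCopula (δ : ℝ → ℝ) : ℝ → ℝ → ℝ := fun u v => min (min u v) ((δ u + δ v) / 2)

/-! Write `S_u = (δ u, 2u - δ u)`. Since both `δ` and `t ↦ 2t - δ t` are monotone on `[0,1]`,
`K_δ(u,v) = min(u,v) - |S_u ∩ S_v| / 2`. By Fubini, `∫∫ |S_u ∩ S_v| du dv = ∫ m(t)² dt` with
`m(t) = |{u : t ∈ S_u}|`, while `∫ m = ∫ |S_u| du = 1 - 2α(1)`. With `∫∫ min(u,v) = 1/3` and
Jensen's inequality `(∫ m)² ≤ ∫ m²` this gives `∫∫ K_δ ≤ 1/3 - (1 - 2α(1))² / 2`,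
which is the claimed bound. -/

open Function

theorem sq_integral_le_integral_sq {β : Type*} [MeasurableSpace β] {ν : Measure β}
    [IsProbabilityMeasure ν] {g : β → ℝ} (hg : MemLp g 2 ν) :
    (∫ b, g b ∂ν) ^ 2 ≤ ∫ b, g b ^ 2 ∂ν := by
  have := ProbabilityTheory.variance_eq_sub hg ▸ ProbabilityTheory.variance_nonneg g ν
  simpa using this

theorem norm_integral_left_le {α β : Type*} [MeasurableSpace α] {μ : Measure α}
    [IsFiniteMeasure μ] {f : α → β → ℝ} {C : ℝ} (hC : ∀ a b, ‖f a b‖ ≤ C) (b : β) :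
    ‖∫ a, f a b ∂μ‖ ≤ C * μ.real univ :=
  norm_integral_le_of_norm_le_const (ae_of_all _ fun a => hC a b)

section GramKernel

variable {α β : Type*} [MeasurableSpace α] [MeasurableSpace β] {μ : Measure α} {ν : Measure β}
  [IsFiniteMeasure μ] [IsFiniteMeasure ν] {f : α → β → ℝ} {C : ℝ}

theorem aestronglyMeasurable_integral_left (hf : AEStronglyMeasurable (uncurry f) (μ.prod ν)) :
    AEStronglyMeasurable (fun b => ∫ a, f a b ∂μ) ν :=
  hf.prod_swap.integral_prod_right'

theorem integrable_mul_apply_snd (hf : AEStronglyMeasurable (uncurry f) (μ.prod ν))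
    (hC : ∀ a b, ‖f a b‖ ≤ C) {a : α} (hfa : AEStronglyMeasurable (f a) ν) :
    Integrable (fun p : α × β => f a p.2 * f p.1 p.2) (μ.prod ν) :=
  .of_bound (hfa.comp_snd.mul hf) (C * C) <| ae_of_all _ fun p => by
    rw [norm_mul]
    exact mul_le_mul (hC _ _) (hC _ _) (norm_nonneg _) ((norm_nonneg _).trans (hC a p.2))

theorem integrable_mul_integral_left (hf : AEStronglyMeasurable (uncurry f) (μ.prod ν))
    (hC : ∀ a b, ‖f a b‖ ≤ C) :
    Integrable (fun p : α × β => f p.1 p.2 * ∫ a', f a' p.2 ∂μ) (μ.prod ν) :=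
  .of_bound (hf.mul (aestronglyMeasurable_integral_left hf).comp_snd) (C * (C * μ.real univ)) <|
    ae_of_all _ fun p => by
      rw [norm_mul]
      exact mul_le_mul (hC _ _) (norm_integral_left_le hC _) (norm_nonneg _)
        ((norm_nonneg _).trans (hC p.1 p.2))

theorem integrable_integral_mul_apply (hf : AEStronglyMeasurable (uncurry f) (μ.prod ν))
    (hC : ∀ a b, ‖f a b‖ ≤ C) {a : α} (hfa : AEStronglyMeasurable (f a) ν) :
    Integrable (fun a' => ∫ b, f a b * f a' b ∂ν) μ :=
  (integrable_mul_apply_snd hf hC hfa).integral_prod_left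

theorem integral_integral_mul_apply (hf : AEStronglyMeasurable (uncurry f) (μ.prod ν))
    (hC : ∀ a b, ‖f a b‖ ≤ C) {a : α} (hfa : AEStronglyMeasurable (f a) ν) :
    ∫ a', ∫ b, f a b * f a' b ∂ν ∂μ = ∫ b, f a b * ∫ a', f a' b ∂μ ∂ν := by
  rw [integral_integral_swap (integrable_mul_apply_snd hf hC hfa)]
  simp only [integral_const_mul]

theorem integrable_integral_integral_mul (hf : AEStronglyMeasurable (uncurry f) (μ.prod ν))
    (hC : ∀ a b, ‖f a b‖ ≤ C) (hfa : ∀ a, AEStronglyMeasurable (f a) ν) :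
    Integrable (fun a => ∫ a', ∫ b, f a b * f a' b ∂ν ∂μ) μ := by
  simp only [integral_integral_mul_apply hf hC (hfa _)]
  exact (integrable_mul_integral_left hf hC).integral_prod_left

theorem integral_integral_integral_mul (hf : AEStronglyMeasurable (uncurry f) (μ.prod ν))
    (hC : ∀ a b, ‖f a b‖ ≤ C) (hfa : ∀ a, AEStronglyMeasurable (f a) ν) :
    ∫ a, ∫ a', ∫ b, f a b * f a' b ∂ν ∂μ ∂μ = ∫ b, (∫ a, f a b ∂μ) ^ 2 ∂ν := by
  simp only [integral_integral_mul_apply hf hC (hfa _)]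
  rw [integral_integral_swap (integrable_mul_integral_left hf hC)]
  simp only [integral_mul_const, sq]

theorem sq_integral_integral_le_integral_integral_integral_mul [IsProbabilityMeasure ν]
    (hf : AEStronglyMeasurable (uncurry f) (μ.prod ν)) (hC : ∀ a b, ‖f a b‖ ≤ C)
    (hfa : ∀ a, AEStronglyMeasurable (f a) ν) :
    (∫ a, ∫ b, f a b ∂ν ∂μ) ^ 2 ≤ ∫ a, ∫ a', ∫ b, f a b * f a' b ∂ν ∂μ ∂μ := by
  have hint : Integrable (uncurry f) (μ.prod ν) := .of_bound hf C (ae_of_all _ fun p => hC _ _)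
  rw [integral_integral_swap hint, integral_integral_integral_mul hf hC hfa]
  exact sq_integral_le_integral_sq <| .of_bound (aestronglyMeasurable_integral_left hf) _ <|
    ae_of_all _ (norm_integral_left_le hC)

end GramKernel

instance isProbabilityMeasure_restrict_Ioc_zero_one :
    IsProbabilityMeasure (volume.restrict (Ioc (0:ℝ) 1)) :=
  ⟨by simp⟩

theorem setIntegral_Ioc_zero_one_indicator_Ioo {a b : ℝ} (ha : 0 ≤ a) (hb : b ≤ 1) :
    ∫ t in Ioc 0 1, (Ioo a b).indicator 1 t = max (b - a) 0 := by
  rw [integral_indicator_one measurableSet_Ioo, measureReal_restrict_apply measurableSet_Ioo,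
    inter_eq_self_of_subset_left (Ioo_subset_Ioc_self.trans (Ioc_subset_Ioc ha hb)),
    Real.volume_real_Ioo]

theorem setIntegral_Ioc_zero_one_min {u : ℝ} (hu : u ∈ Icc (0:ℝ) 1) :
    ∫ v in Ioc 0 1, min u v = u - u ^ 2 / 2 := by
  have hcont : Continuous fun v : ℝ => min u v := by fun_prop
  rw [← intervalIntegral.integral_of_le zero_le_one,
    ← intervalIntegral.integral_add_adjacent_intervals (hcont.intervalIntegrable 0 u)
      (hcont.intervalIntegrable u 1),
    intervalIntegral.integral_congr (f := fun v => min u v) (g := fun v => v)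
      fun v hv => min_eq_right (uIcc_of_le hu.1 ▸ hv).2,
    intervalIntegral.integral_congr (f := fun v => min u v) (g := fun _ => u)
      fun v hv => min_eq_left (uIcc_of_le hu.2 ▸ hv).1]
  simp only [integral_id, intervalIntegral.integral_const, smul_eq_mul]
  ring

/-- The conditions characterising diagonal sections `t ↦ C(t, t)` of copulas. -/
structure IsCopulaDiagonal (δ : ℝ → ℝ) : Prop where
  map_zero : δ 0 = 0
  map_one : δ 1 = 1
  le_self : ∀ t ∈ Icc (0:ℝ) 1, δ t ≤ t
  monotoneOn : MonotoneOn δ (Icc 0 1)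
  monotoneOn_two_mul_sub : MonotoneOn (fun t => 2 * t - δ t) (Icc 0 1)

theorem SmoothSymDiagonal.isCopulaDiagonal {δ δ' : ℝ → ℝ} (h : SmoothSymDiagonal δ δ') :
    IsCopulaDiagonal δ where
  map_zero := h.2.2.2.1
  map_one := h.2.2.2.2.1
  le_self t ht := (h.2.2.2.2.2.1 t ht).2
  monotoneOn := h.2.1.monotoneOn
  monotoneOn_two_mul_sub u hu v hv huv := by
    have hlip := h.2.2.1 v hv u hu
    rw [abs_of_nonneg (sub_nonneg.2 huv)] at hlip
    linarith [le_abs_self (δ v - δ u)]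

def diagStrip (δ : ℝ → ℝ) (u : ℝ) : Set ℝ := Ioo (δ u) (2 * u - δ u)

theorem norm_indicator_diagStrip_le (δ : ℝ → ℝ) (u t : ℝ) :
    ‖(diagStrip δ u).indicator (1 : ℝ → ℝ) t‖ ≤ 1 := by
  simpa using norm_indicator_le_norm_self (1 : ℝ → ℝ) t

theorem measurable_indicator_diagStrip (δ : ℝ → ℝ) (u : ℝ) :
    Measurable ((diagStrip δ u).indicator (1 : ℝ → ℝ)) :=
  measurable_const.indicator measurableSet_Ioo

namespace IsCopulaDiagonal

variable {δ : ℝ → ℝ} (hδ : IsCopulaDiagonal δ)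
include hδ

theorem nonneg {u : ℝ} (hu : u ∈ Icc (0:ℝ) 1) : 0 ≤ δ u :=
  hδ.map_zero ▸ hδ.monotoneOn (left_mem_Icc.2 zero_le_one) hu hu.1

theorem two_mul_sub_le_one {u : ℝ} (hu : u ∈ Icc (0:ℝ) 1) : 2 * u - δ u ≤ 1 := by
  have := hδ.monotoneOn_two_mul_sub hu (right_mem_Icc.2 zero_le_one) hu.2
  simp only [hδ.map_one] at this
  linarith

theorem diagCopula_eq {u v : ℝ} (hu : u ∈ Icc (0:ℝ) 1) (hv : v ∈ Icc (0:ℝ) 1) :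
    diagCopula δ u v
      = min u v - max (min (2 * u - δ u) (2 * v - δ v) - max (δ u) (δ v)) 0 / 2 := by
  have hmono {x y : ℝ} (hx : x ∈ Icc (0:ℝ) 1) (hy : y ∈ Icc (0:ℝ) 1) (hxy : x ≤ y) :
      δ x ≤ δ y ∧ 2 * x - δ x ≤ 2 * y - δ y :=
    ⟨hδ.monotoneOn hx hy hxy, hδ.monotoneOn_two_mul_sub hx hy hxy⟩
  rcases le_total u v with huv | hvu
  · obtain ⟨h₁, h₂⟩ := hmono hu hv huv
    simp only [diagCopula, min_def, max_def]
    split_ifs <;> linarith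
  · obtain ⟨h₁, h₂⟩ := hmono hv hu hvu
    simp only [diagCopula, min_def, max_def]
    split_ifs <;> linarith

theorem diagCopula_eq_min_sub_integral {u v : ℝ} (hu : u ∈ Icc (0:ℝ) 1)
    (hv : v ∈ Icc (0:ℝ) 1) :
    diagCopula δ u v = min u v
      - (∫ t in Ioc 0 1, (diagStrip δ u).indicator 1 t * (diagStrip δ v).indicator 1 t) / 2 := by
  have hinter (t : ℝ) : (diagStrip δ u).indicator 1 t * (diagStrip δ v).indicator 1 t
      = (diagStrip δ u ∩ diagStrip δ v).indicator (1 : ℝ → ℝ) t := by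
    rw [inter_indicator_one]; rfl
  simp_rw [hinter, diagStrip, Ioo_inter_Ioo]
  rw [setIntegral_Ioc_zero_one_indicator_Ioo (le_max_of_le_left (hδ.nonneg hu))
    (min_le_of_left_le (hδ.two_mul_sub_le_one hu)), hδ.diagCopula_eq hu hv]

theorem integral_indicator_diagStrip {u : ℝ} (hu : u ∈ Icc (0:ℝ) 1) :
    ∫ t in Ioc 0 1, (diagStrip δ u).indicator 1 t = 2 * (u - δ u) := by
  rw [diagStrip,
    setIntegral_Ioc_zero_one_indicator_Ioo (hδ.nonneg hu) (hδ.two_mul_sub_le_one hu),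
    max_eq_left (by linarith [hδ.le_self u hu])]
  ring

theorem aestronglyMeasurable_indicator_diagStrip :
    AEStronglyMeasurable (uncurry fun u t => (diagStrip δ u).indicator (1 : ℝ → ℝ) t)
      ((volume.restrict (Ioc 0 1)).prod (volume.restrict (Ioc 0 1))) := by
  have hN := nullMeasurableSet_regionBetween (volume.restrict (Ioc (0:ℝ) 1))
    (aemeasurable_restrict_of_monotoneOn measurableSet_Ioc
      (hδ.monotoneOn.mono Ioc_subset_Icc_self))
    (aemeasurable_restrict_of_monotoneOn measurableSet_Ioc
      (hδ.monotoneOn_two_mul_sub.mono Ioc_subset_Icc_self)) MeasurableSet.univ.nullMeasurableSet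
  have hac := (Measure.AbsolutelyContinuous.refl (volume.restrict (Ioc (0:ℝ) 1))).prod
    (Measure.restrict_le_self (μ := volume) (s := Ioc (0:ℝ) 1)).absolutelyContinuous
  convert (aestronglyMeasurable_const (b := (1:ℝ))).indicator₀ (hN.mono_ac hac) using 1
  ext ⟨u, t⟩
  simp [indicator, diagStrip]

theorem integral_integral_diagCopula :
    ∫ u in Ioc 0 1, ∫ v in Ioc 0 1, diagCopula δ u v = 1 / 3 - (∫ u in Ioc 0 1, ∫ v in Ioc 0 1,
      ∫ t in Ioc 0 1, (diagStrip δ u).indicator 1 t * (diagStrip δ v).indicator 1 t) / 2 := by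
  have hf := hδ.aestronglyMeasurable_indicator_diagStrip
  have hfa (u : ℝ) : AEStronglyMeasurable ((diagStrip δ u).indicator (1 : ℝ → ℝ))
      (volume.restrict (Ioc 0 1)) :=
    (measurable_indicator_diagStrip δ u).aestronglyMeasurable
  have hinner : ∀ u ∈ Ioc (0:ℝ) 1, ∫ v in Ioc 0 1, diagCopula δ u v = u - u ^ 2 / 2
      - (∫ v in Ioc 0 1, ∫ t in Ioc 0 1,
          (diagStrip δ u).indicator 1 t * (diagStrip δ v).indicator 1 t) / 2 := by
    intro u hu
    rw [← setIntegral_Ioc_zero_one_min (Ioc_subset_Icc_self hu), ← integral_div,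
      ← integral_sub (by fun_prop : Continuous fun v : ℝ => min u v).integrableOn_Ioc
        ((integrable_integral_mul_apply hf (norm_indicator_diagStrip_le δ) (hfa u)).div_const 2)]
    exact setIntegral_congr_fun measurableSet_Ioc fun v hv =>
      hδ.diagCopula_eq_min_sub_integral (Ioc_subset_Icc_self hu) (Ioc_subset_Icc_self hv)
  rw [setIntegral_congr_fun measurableSet_Ioc hinner, integral_sub, integral_div]
  · congr 1
    rw [← intervalIntegral.integral_of_le zero_le_one]
    norm_num [integral_id, intervalIntegral.integral_sub, integral_pow,
      intervalIntegral.integral_div]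
  · exact (by fun_prop : Continuous fun u : ℝ => u - u ^ 2 / 2).integrableOn_Ioc
  · exact (integrable_integral_integral_mul hf (norm_indicator_diagStrip_le δ) hfa).div_const 2

theorem integral_integral_indicator_diagStrip :
    ∫ u in Ioc 0 1, ∫ t in Ioc 0 1, (diagStrip δ u).indicator 1 t
      = 1 - 2 * ∫ u in Ioc 0 1, δ u := by
  have hδint : IntegrableOn δ (Ioc 0 1) :=
    (hδ.monotoneOn.integrableOn_isCompact isCompact_Icc).mono_set Ioc_subset_Icc_self
  rw [setIntegral_congr_fun measurableSet_Ioc fun u hu =>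
      hδ.integral_indicator_diagStrip (Ioc_subset_Icc_self hu),
    integral_const_mul, integral_sub (continuous_id.integrableOn_Ioc (f := fun u : ℝ => u)) hδint,
    ← intervalIntegral.integral_of_le zero_le_one (f := fun u => u), integral_id]
  ring

theorem integral_integral_diagCopula_le :
    ∫ u in Ioc 0 1, ∫ v in Ioc 0 1, diagCopula δ u v
      ≤ 2 * (∫ u in Ioc 0 1, δ u) - 2 * (∫ u in Ioc 0 1, δ u) ^ 2 - 1 / 6 := by
  have hsq := sq_integral_integral_le_integral_integral_integral_mul
    hδ.aestronglyMeasurable_indicator_diagStrip (norm_indicator_diagStrip_le δ)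
    fun u => (measurable_indicator_diagStrip δ u).aestronglyMeasurable
  rw [hδ.integral_integral_indicator_diagStrip] at hsq
  rw [hδ.integral_integral_diagCopula]
  linarith

end IsCopulaDiagonal

theorem diag_copula_integral_upper_bound (δ δ' : ℝ → ℝ) (hδ : SmoothSymDiagonal δ δ')
    (α : ℝ → ℝ) (hα : ∀ u : ℝ, α u = ∫ t in (0:ℝ)..u, δ t) :
    (∫ u in (0:ℝ)..1, ∫ v in (0:ℝ)..1, diagCopula δ u v) ≤
      2 * α 1 - 2 * (α 1) ^ 2 - 1/6 := by
  simp only [hα, intervalIntegral.integral_of_le zero_le_one]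
  exact hδ.isCopulaDiagonal.integral_integral_diagCopula_le
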